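/- arXiv:1501.01350 — 8 statements merged into one kernel-verified Lean document; each statement's English description precedes it below -/
import Mathlib

section
/- For every real α with 1 < α < 2 and every integer k with k ≥ 3, the fractional centred difference coefficient satisfies the two-sided bound S(α)·((α+4)/(α+2k))^{2(α+1)} < |g_k^{(α)}| < S(α)·((α+6)/(α+2(k+1)))^{α+1}, where S(α) = −Γ(α+1)/(Γ(α/2−1)·Γ(α/2+3)) (note S(α) > 0 for 1 < α < 2 since Γ(α/2−1) < 0). -/
/-!
From `g_{k+1} = g_k (2k - α)/(2k + 2 + α)` and `g_2 = -S(α)`, `-g_k` is `S(α)` times a product of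
these ratios over `2 ≤ j < k`. Both bounds telescope into products of the same shape, with factors
`((α + 2j)/(α + 2j + 2))^(2(α+1))` and `((α + 2j + 2)/(α + 2j + 4))^(α+1)`, so it suffices to compare
factor by factor. The upper comparison is Bernoulli's inequality; the lower one combines
`1 - 1/x ≤ log x` with the sharper `log x ≤ (x - 1)/√x` for `x ≥ 1`.
-/

open Real

/-- The fractional centred difference coefficients
`g_k^{(α)} = ((−1)^k Γ(α+1)) / (Γ(α/2 − k + 1) Γ(α/2 + k + 1))`. -/
noncomputable def fracCoeff (α : ℝ) (k : ℤ) : ℝ :=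
  ((-1 : ℝ) ^ k * Real.Gamma (α + 1)) /
    (Real.Gamma (α / 2 - (k : ℝ) + 1) * Real.Gamma (α / 2 + (k : ℝ) + 1))

/-- `S(α) = −Γ(α+1)/(Γ(α/2−1)·Γ(α/2+3))`. -/
noncomputable def Scoeff (α : ℝ) : ℝ :=
  -Real.Gamma (α + 1) / (Real.Gamma (α / 2 - 1) * Real.Gamma (α / 2 + 3))

namespace Real

theorem log_le_sub_inv_div_two {x : ℝ} (hx : 1 ≤ x) : log x ≤ (x - x⁻¹) / 2 := by
  have hx0 : 0 < x := by linarith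
  have hc : 0 ≤ (x - x⁻¹) / 2 := by
    have : x⁻¹ ≤ 1 := inv_le_one_of_one_le₀ hx
    linarith
  rw [log_le_iff_le_exp hx0]
  refine le_trans ?_ (quadratic_le_exp_of_nonneg hc)
  have hgap : 1 + (x - x⁻¹) / 2 + ((x - x⁻¹) / 2) ^ 2 / 2 - x = (x - 1) ^ 4 / (8 * x ^ 2) := by
    field_simp
    ring
  have : 0 ≤ (x - 1) ^ 4 / (8 * x ^ 2) := by positivity
  linarith

theorem log_le_sub_one_div_sqrt {x : ℝ} (hx : 1 ≤ x) : log x ≤ (x - 1) / √x := by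
  have hs : 1 ≤ √x := one_le_sqrt.2 hx
  have hsq : √x ^ 2 = x := sq_sqrt (by linarith)
  calc log x = 2 * log √x := by rw [log_sqrt (by linarith)]; ring
    _ ≤ √x - (√x)⁻¹ := by linarith [log_le_sub_inv_div_two hs]
    _ = (x - 1) / √x := by field_simp; rw [hsq]

end Real

theorem div_rpow_mul_div_rpow {c x y : ℝ} (hc : 0 ≤ c) (hx : 0 < x) (hy : 0 ≤ y) (p : ℝ) :
    (c / x) ^ p * (x / y) ^ p = (c / y) ^ p := by
  rw [← mul_rpow (by positivity) (by positivity), div_mul_div_cancel₀ hx.ne']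

theorem lt_of_le_of_forall_mul_lt {R : Type*} [Semiring R] [LinearOrder R] [IsStrictOrderedRing R]
    {u v s t : ℤ → R} {a : ℤ} (hu : ∀ n ≥ a, 0 < u n)
    (hus : ∀ n ≥ a, u (n + 1) = u n * s n) (hvt : ∀ n ≥ a, v (n + 1) = v n * t n)
    (hst : ∀ n ≥ a, s n < t n) (ha : u a ≤ v a) {n : ℤ} (hn : a < n) : u n < v n := by
  have step : ∀ n ≥ a, u n ≤ v n → u (n + 1) < v (n + 1) := by
    intro n hn huv
    have hs : 0 < s n := pos_of_mul_pos_right (hus n hn ▸ hu (n + 1) (by omega)) (hu n hn).le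
    calc u (n + 1) = u n * s n := hus n hn
      _ ≤ v n * s n := mul_le_mul_of_nonneg_right huv hs.le
      _ < v n * t n := mul_lt_mul_of_pos_left (hst n hn) ((hu n hn).trans_le huv)
      _ = v (n + 1) := (hvt n hn).symm
  replace hn : a + 1 ≤ n := hn
  induction n, hn using Int.leInduction with
  | base => exact step a le_rfl ha
  | succ n hn ih => exact step n (by omega) ih.le

noncomputable def fracRatio (α x : ℝ) : ℝ := (2 * x - α) / (2 * x + 2 + α)

theorem fracRatio_lt_rpow {α x : ℝ} (hα : 0 ≤ α) (hx : 0 ≤ x) :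
    fracRatio α x < ((α + 2 * x + 2) / (α + 2 * x + 4)) ^ (α + 1) := by
  have hB := one_add_mul_self_le_rpow_one_add
    (s := -2 / (α + 2 * x + 4)) (by rw [le_div_iff₀ (by positivity)]; linarith)
    (p := α + 1) (by linarith)
  have hbase : 1 + -2 / (α + 2 * x + 4) = (α + 2 * x + 2) / (α + 2 * x + 4) := by
    field_simp; ring
  rw [hbase] at hB
  refine lt_of_lt_of_le ?_ hB
  have hr : fracRatio α x = 1 - 2 * (α + 1) / (2 * x + 2 + α) := by
    unfold fracRatio; field_simp; ring
  have hcmp : 2 * (α + 1) / (α + 2 * x + 4) < 2 * (α + 1) / (2 * x + 2 + α) :=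
    div_lt_div_of_pos_left (by linarith) (by linarith) (by linarith)
  have hrw : (α + 1) * (-2 / (α + 2 * x + 4)) = -(2 * (α + 1) / (α + 2 * x + 4)) := by ring
  linarith

theorem rpow_lt_fracRatio {α x : ℝ} (hα : -1 < α) (hα2 : α < 2) (hx : 2 ≤ x) :
    ((α + 2 * x) / (α + 2 * x + 2)) ^ (2 * (α + 1)) < fracRatio α x := by
  set y := (α + 2 * x) / (α + 2 * x + 2) with hy
  set X := (fracRatio α x)⁻¹ with hX
  have hy0 : 0 < y := div_pos (by linarith) (by linarith)
  have hr0 : 0 < fracRatio α x := div_pos (by linarith) (by linarith)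
  have hX1 : 1 < X := by
    rw [hX, fracRatio, inv_div, one_lt_div (by linarith)]; linarith
  have hlogy : 4 * (α + 1) / (α + 2 * x + 2) ≤ 2 * (α + 1) * log y⁻¹ := by
    have h := one_sub_inv_le_log_of_pos (inv_pos.2 hy0)
    rw [inv_inv, hy, one_sub_div (by linarith)] at h
    calc 4 * (α + 1) / (α + 2 * x + 2)
        = 2 * (α + 1) * ((α + 2 * x + 2 - (α + 2 * x)) / (α + 2 * x + 2)) := by ring
      _ ≤ 2 * (α + 1) * log y⁻¹ := mul_le_mul_of_nonneg_left h (by linarith)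
  -- `log X ≤ X - 1` is too weak here; even with `(X - 1) / √X` the margin vanishes at `α = 2, x = 2`.
  have hsqrt : (α + 2 * x + 2) / (2 * (2 * x - α)) < √X := by
    rw [lt_sqrt (div_pos (by linarith) (by linarith)).le, hX, fracRatio, inv_div, div_pow,
      div_lt_div_iff₀ (by nlinarith) (by linarith)]
    nlinarith [mul_pos (by linarith : (0:ℝ) < 2 - α) (by linarith : (0:ℝ) < α + 1)]
  have hlogX : log X < 4 * (α + 1) / (α + 2 * x + 2) := by
    calc log X ≤ (X - 1) / √X := log_le_sub_one_div_sqrt hX1.le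
      _ < (X - 1) / ((α + 2 * x + 2) / (2 * (2 * x - α))) :=
          div_lt_div_of_pos_left (by linarith) (div_pos (by linarith) (by linarith)) hsqrt
      _ = 4 * (α + 1) / (α + 2 * x + 2) := by
          have : 2 * x - α ≠ 0 := by linarith
          have : 2 * x + 2 + α ≠ 0 := by linarith
          rw [hX, fracRatio, inv_div]
          field_simp
          ring
  rw [← exp_log hr0, rpow_def_of_pos hy0, exp_lt_exp]
  rw [log_inv] at hlogy hlogX
  nlinarith

theorem Real.Gamma_ne_zero_of_fract_ne_zero {s : ℝ} (hs : Int.fract s ≠ 0) : Gamma s ≠ 0 :=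
  Gamma_ne_zero fun m hm => hs (by rw [hm]; exact_mod_cast Int.fract_intCast (-m : ℤ))

theorem Int.fract_div_two_ne_zero {α : ℝ} (hα0 : 0 < α) (hα2 : α < 2) :
    Int.fract (α / 2) ≠ 0 := by
  rw [Int.fract_eq_self.2 ⟨by linarith, by linarith⟩]
  linarith

theorem fracCoeff_add_one {α : ℝ} (hα : Int.fract (α / 2) ≠ 0) (k : ℤ) :
    fracCoeff α (k + 1) = fracCoeff α k * fracRatio α k := by
  have hne : ∀ n : ℤ, α / 2 + n ≠ 0 ∧ Gamma (α / 2 + n) ≠ 0 := fun n => by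
    have h : Int.fract (α / 2 + n) ≠ 0 := by rwa [Int.fract_add_intCast]
    exact ⟨fun h0 => h (by rw [h0, Int.fract_zero]), Gamma_ne_zero_of_fract_ne_zero h⟩
  obtain ⟨h₁, h₂⟩ : α / 2 - k ≠ 0 ∧ Gamma (α / 2 - k) ≠ 0 := by
    simpa [sub_eq_add_neg] using hne (-k)
  obtain ⟨h₃, h₄⟩ : α / 2 + k + 1 ≠ 0 ∧ Gamma (α / 2 + k + 1) ≠ 0 := by
    simpa [add_assoc] using hne (k + 1)
  have e₁ : Gamma (α / 2 - ↑(k + 1) + 1) = Gamma (α / 2 - k) := by push_cast; ring_nf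
  have e₂ : Gamma (α / 2 + ↑(k + 1) + 1) = (α / 2 + k + 1) * Gamma (α / 2 + k + 1) := by
    rw [← Gamma_add_one h₃]; push_cast; ring_nf
  have e₃ : Gamma (α / 2 - k + 1) = (α / 2 - k) * Gamma (α / 2 - k) := Gamma_add_one h₁
  have h₅ : 2 * (k : ℝ) + 2 + α ≠ 0 := fun h => h₃ (by linarith)
  unfold fracCoeff fracRatio
  rw [e₁, e₂, e₃, zpow_add_one₀ (by norm_num), div_mul_div_comm, div_eq_div_iff
    (mul_ne_zero h₂ (mul_ne_zero h₃ h₄)) (mul_ne_zero (mul_ne_zero (mul_ne_zero h₁ h₂) h₄) h₅)]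
  ring

theorem fracCoeff_two (α : ℝ) : fracCoeff α 2 = -Scoeff α := by
  unfold fracCoeff Scoeff
  norm_num
  ring_nf

theorem Scoeff_pos {α : ℝ} (hα0 : 0 < α) (hα2 : α < 2) : 0 < Scoeff α := by
  have hrec : Gamma (α / 2) = (α / 2 - 1) * Gamma (α / 2 - 1) := by
    rw [← Gamma_add_one (by linarith), sub_add_cancel]
  have hneg : Gamma (α / 2 - 1) < 0 :=
    neg_of_mul_pos_right (hrec ▸ Gamma_pos_of_pos (by linarith)) (by linarith)
  exact div_pos_of_neg_of_neg (neg_neg_of_pos (Gamma_pos_of_pos (by linarith)))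
    (mul_neg_of_neg_of_pos hneg (Gamma_pos_of_pos (by linarith)))

theorem fracCoeff_neg {α : ℝ} (hα0 : 0 < α) (hα2 : α < 2) {k : ℤ} (hk : 2 ≤ k) :
    fracCoeff α k < 0 := by
  induction k, hk using Int.leInduction with
  | base => simpa [fracCoeff_two] using Scoeff_pos hα0 hα2
  | succ n hn ih =>
    have : (2 : ℝ) ≤ n := by exact_mod_cast hn
    rw [fracCoeff_add_one (Int.fract_div_two_ne_zero hα0 hα2)]
    exact mul_neg_of_neg_of_pos ih (div_pos (by linarith) (by linarith))

theorem Scoeff_mul_rpow_lt_neg_fracCoeff {α : ℝ} (hα0 : 0 < α) (hα2 : α < 2) {k : ℤ}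
    (hk : 3 ≤ k) : Scoeff α * ((α + 4) / (α + 2 * (k : ℝ))) ^ (2 * (α + 1)) < -fracCoeff α k := by
  refine lt_of_le_of_forall_mul_lt (a := 2)
    (u := fun n : ℤ => Scoeff α * ((α + 4) / (α + 2 * (n : ℝ))) ^ (2 * (α + 1)))
    (v := fun n => -fracCoeff α n)
    (s := fun n : ℤ => ((α + 2 * (n : ℝ)) / (α + 2 * n + 2)) ^ (2 * (α + 1)))
    (t := fun n : ℤ => fracRatio α n) (fun n hn => ?_) (fun n hn => ?_) (fun n _ => ?_)
    (fun n hn => ?_) ?_ (by omega : (2 : ℤ) < k)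
  · have : (2 : ℝ) ≤ n := by exact_mod_cast hn
    exact mul_pos (Scoeff_pos hα0 hα2) (rpow_pos_of_pos (div_pos (by linarith) (by linarith)) _)
  · have : (2 : ℝ) ≤ n := by exact_mod_cast hn
    rw [mul_assoc, div_rpow_mul_div_rpow (by linarith) (by linarith) (by linarith)]
    push_cast
    ring_nf
  · rw [fracCoeff_add_one (Int.fract_div_two_ne_zero hα0 hα2)]
    ring
  · exact rpow_lt_fracRatio (by linarith) hα2 (by exact_mod_cast hn)
  · rw [fracCoeff_two]
    norm_num [div_self (by linarith : α + 4 ≠ 0)]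

theorem neg_fracCoeff_lt_Scoeff_mul_rpow {α : ℝ} (hα0 : 0 < α) (hα2 : α < 2) {k : ℤ}
    (hk : 3 ≤ k) : -fracCoeff α k < Scoeff α * ((α + 6) / (α + 2 * ((k : ℝ) + 1))) ^ (α + 1) := by
  refine lt_of_le_of_forall_mul_lt (a := 2) (u := fun n => -fracCoeff α n)
    (v := fun n : ℤ => Scoeff α * ((α + 6) / (α + 2 * ((n : ℝ) + 1))) ^ (α + 1))
    (s := fun n : ℤ => fracRatio α n)
    (t := fun n : ℤ => ((α + 2 * (n : ℝ) + 2) / (α + 2 * n + 4)) ^ (α + 1))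
    (fun n hn => neg_pos.2 (fracCoeff_neg hα0 hα2 hn)) (fun n _ => ?_) (fun n hn => ?_)
    (fun n hn => ?_) ?_ (by omega : (2 : ℤ) < k)
  · rw [fracCoeff_add_one (Int.fract_div_two_ne_zero hα0 hα2)]
    ring
  · have : (2 : ℝ) ≤ n := by exact_mod_cast hn
    rw [mul_assoc, show α + 2 * ((n : ℝ) + 1) = α + 2 * n + 2 by ring,
      div_rpow_mul_div_rpow (by linarith) (by linarith) (by linarith)]
    push_cast
    ring_nf
  · exact fracRatio_lt_rpow hα0.le (by exact_mod_cast (show (0 : ℤ) ≤ n by omega))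
  · rw [fracCoeff_two]
    norm_num [div_self (by linarith : α + 6 ≠ 0)]

theorem fracCoeff_two_sided_bound (α : ℝ) (hα1 : 1 < α) (hα2 : α < 2)
    (k : ℤ) (hk : 3 ≤ k) :
    Scoeff α * ((α + 4) / (α + 2 * (k : ℝ))) ^ (2 * (α + 1)) < |fracCoeff α k| ∧
    |fracCoeff α k| < Scoeff α * ((α + 6) / (α + 2 * ((k : ℝ) + 1))) ^ (α + 1) := by
  have hα0 : 0 < α := by linarith
  rw [abs_of_neg (fracCoeff_neg hα0 hα2 (by omega))]
  exact ⟨Scoeff_mul_rpow_lt_neg_fracCoeff hα0 hα2 hk, neg_fracCoeff_lt_Scoeff_mul_rpow hα0 hα2 hk⟩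
end

section
/- For every real α with 1 < α < 2 and every integer n ≥ 3, the tail sum of absolute values of the fractional centred difference coefficients satisfies S(α)·(α+2n)^{−(2α+1)}·(α+4)^{2(α+1)}/(2(2α+1)) < Σ_{k=n}^{∞} |g_k^{(α)}| < S(α)·(α+2n)^{−α}·(α+6)^{α+1}/(2α), where S(α) = −Γ(α+1)/(Γ(α/2−1)·Γ(α/2+3)); in particular the series Σ_{k=n}^{∞} |g_k^{(α)}| converges. -/
/-!
By Euler's reflection formula, `g_k^{(α)} = -c(α) Γ(k - α/2) / Γ(k + α/2 + 1)` with
`c(α) = Γ(α + 1) sin(πα/2) / π > 0`, and this is `-c(α)/α` times the difference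
`r(k) - r(k + 1)` of `r(x) = Γ(x - α/2) / Γ(x + α/2)`. Since `r(x) → 0`, the tail sum
telescopes to `c(α) r(n) / α`.

As `r(x + 1) / r(x) = (x - α/2) / (x + α/2)`, Bernoulli's inequality shows that
`r(n) (n + α/2)^α` decreases and `r(n) (n + α/2)^(2α+1)` increases for `n ≥ 3`. Comparing with
`n = 3`, where `c(α) r(3) = (2 - α/2) S(α)`, gives both bounds.
-/

open Real

open Filter Topology

lemma hasSum_sub_succ_of_antitone {f : ℕ → ℝ} {l : ℝ} (hf : Antitone f)
    (h : Tendsto f atTop (𝓝 l)) : HasSum (fun n => f n - f (n + 1)) (f 0 - l) := by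
  rw [hasSum_iff_tendsto_nat_of_nonneg (fun n => sub_nonneg.2 (hf n.le_succ))]
  simp only [Finset.sum_range_sub']
  exact tendsto_const_nhds.sub h

lemma add_one_rpow_eq_mul {u : ℝ} (hu : 0 < u) (p : ℝ) :
    (u + 1) ^ p = u ^ p * (1 + u⁻¹) ^ p := by
  rw [← mul_rpow hu.le (by positivity), mul_one_add, mul_inv_cancel₀ hu.ne']

lemma sub_mul_add_one_rpow_le {α u : ℝ} (hα₁ : 1 ≤ α) (hα₂ : α ≤ 2) (hu : α ≤ u) :
    (u - α) * (u + 1) ^ α ≤ u ^ (α + 1) := by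
  have hu₀ : 0 < u := by linarith
  have bernoulli : (1 + u⁻¹) ^ (α - 1) ≤ 1 + (α - 1) * u⁻¹ :=
    rpow_one_add_le_one_add_mul_self (by linarith [inv_nonneg.2 hu₀.le]) (by linarith)
      (by linarith)
  have cubic : (u - α) * ((1 + u⁻¹) * (1 + (α - 1) * u⁻¹)) ≤ u := by
    rw [← sub_nonneg]
    have : u - (u - α) * ((1 + u⁻¹) * (1 + (α - 1) * u⁻¹))
        = ((α ^ 2 - α + 1) * u + α * (α - 1)) / u ^ 2 := by
      field_simp; ring
    rw [this]
    apply div_nonneg _ (by positivity)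
    have : 0 ≤ α ^ 2 - α + 1 := by nlinarith
    exact add_nonneg (mul_nonneg this hu₀.le) (mul_nonneg (by linarith) (by linarith))
  calc (u - α) * (u + 1) ^ α
      = u ^ α * ((u - α) * ((1 + u⁻¹) * (1 + u⁻¹) ^ (α - 1))) := by
        rw [rpow_sub_one (by positivity), mul_div_cancel₀ _ (by positivity),
          add_one_rpow_eq_mul hu₀]
        ring
    _ ≤ u ^ α * ((u - α) * ((1 + u⁻¹) * (1 + (α - 1) * u⁻¹))) := by gcongr
    _ ≤ u ^ α * u := by gcongr
    _ = u ^ (α + 1) := (rpow_add_one hu₀.ne' α).symm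

lemma rpow_add_one_le_sub_mul_add_one_rpow {α p u : ℝ} (hα : 0 < α) (hp : 1 ≤ p)
    (hu : α ≤ u) (h : α * p ≤ (p - α) * u) : u ^ (p + 1) ≤ (u - α) * (u + 1) ^ p := by
  have hu₀ : 0 < u := by linarith
  have bernoulli : 1 + p * u⁻¹ ≤ (1 + u⁻¹) ^ p :=
    one_add_mul_self_le_rpow_one_add (by linarith [inv_nonneg.2 hu₀.le]) hp
  have quadratic : u ≤ (u - α) * (1 + p * u⁻¹) := by
    rw [← sub_nonneg]
    have : (u - α) * (1 + p * u⁻¹) - u = ((p - α) * u - α * p) / u := by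
      field_simp; ring
    rw [this]
    exact div_nonneg (by linarith) hu₀.le
  calc u ^ (p + 1) = u ^ p * u := rpow_add_one hu₀.ne' p
    _ ≤ u ^ p * ((u - α) * (1 + p * u⁻¹)) := by gcongr
    _ ≤ u ^ p * ((u - α) * (1 + u⁻¹) ^ p) := by gcongr
    _ = (u - α) * (u + 1) ^ p := by
        rw [add_one_rpow_eq_mul hu₀]
        ring

lemma mul_rpow_div_lt_sub_mul_rpow {α : ℝ} (hα₁ : 1 ≤ α) (hα₂ : α ≤ 2) :
    α * (2 + α / 2) ^ (2 * α + 2) / (2 * α + 1)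
      < (2 - α / 2) * (3 + α / 2) ^ (2 * α + 1) := by
  set T := (2 + α / 2) ^ (2 * α + 1)
  have hT : 0 < T := by positivity
  have h43 : 64 / 27 ≤ (4 / 3 : ℝ) ^ (2 * α + 1) := by
    calc (64 / 27 : ℝ) = (4 / 3) ^ (3 : ℝ) := by norm_num
      _ ≤ (4 / 3) ^ (2 * α + 1) := rpow_le_rpow_of_exponent_le (by norm_num) (by linarith)
  have hscale : (4 / 3 : ℝ) ^ (2 * α + 1) * T ≤ (3 + α / 2) ^ (2 * α + 1) := by
    rw [← mul_rpow (by norm_num) (by positivity)]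
    exact rpow_le_rpow (by positivity) (by linarith) (by linarith)
  calc α * (2 + α / 2) ^ (2 * α + 2) / (2 * α + 1)
      = α * (2 + α / 2) / (2 * α + 1) * T := by
        rw [show 2 * α + 2 = 2 * α + 1 + 1 by ring, rpow_add_one (by positivity)]
        ring
    _ < 2 * T := by
        gcongr
        rw [div_lt_iff₀ (by linarith)]
        nlinarith
    _ ≤ (2 - α / 2) * (4 / 3 : ℝ) ^ (2 * α + 1) * T := by
        gcongr
        nlinarith
    _ ≤ (2 - α / 2) * (3 + α / 2) ^ (2 * α + 1) := by
        rw [mul_assoc]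
        gcongr
        linarith

lemma two_mul_rpow_neg_mul_two_mul_rpow_add_one {a b : ℝ} (ha : 0 < a) (hb : 0 ≤ b) (p : ℝ) :
    (2 * a) ^ (-p) * (2 * b) ^ (p + 1) = 2 * (b ^ (p + 1) / a ^ p) := by
  rw [mul_rpow zero_le_two ha.le, mul_rpow zero_le_two hb, rpow_neg zero_le_two,
    rpow_neg ha.le, rpow_add_one two_ne_zero]
  have : (2 : ℝ) ^ p ≠ 0 := (rpow_pos_of_pos two_pos p).ne'
  field_simp

noncomputable def gammaRatio (α x : ℝ) : ℝ := Gamma (x - α / 2) / Gamma (x + α / 2)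

section GammaRatio

variable {α x : ℝ}

lemma gammaRatio_pos (hα : 0 ≤ α) (hx : α / 2 < x) : 0 < gammaRatio α x :=
  div_pos (Gamma_pos_of_pos (by linarith)) (Gamma_pos_of_pos (by linarith))

lemma gammaRatio_add_one (h₁ : x - α / 2 ≠ 0) (h₂ : x + α / 2 ≠ 0) :
    gammaRatio α (x + 1) = (x - α / 2) / (x + α / 2) * gammaRatio α x := by
  rw [gammaRatio, gammaRatio, add_sub_right_comm, add_right_comm, Gamma_add_one h₁,
    Gamma_add_one h₂, mul_div_mul_comm]

lemma gammaRatio_sub_gammaRatio_add_one (h₁ : x - α / 2 ≠ 0) (h₂ : x + α / 2 ≠ 0) :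
    gammaRatio α x - gammaRatio α (x + 1)
      = α * (Gamma (x - α / 2) / Gamma (x + α / 2 + 1)) := by
  rw [gammaRatio_add_one h₁ h₂, gammaRatio, Gamma_add_one h₂, div_mul_eq_div_div_swap]
  have : 1 - (x - α / 2) / (x + α / 2) = α / (x + α / 2) := by
    rw [eq_div_iff h₂, sub_mul, div_mul_cancel₀ _ h₂]
    ring
  linear_combination Gamma (x - α / 2) / Gamma (x + α / 2) * this

lemma gammaRatio_add_one_mul_rpow (hα : 0 ≤ α) (hx : α / 2 < x) (p : ℝ) :
    gammaRatio α (x + 1) * (x + 1 + α / 2) ^ p = gammaRatio α x * (x + α / 2) ^ p *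
      ((x - α / 2) * (x + 1 + α / 2) ^ p / (x + α / 2) ^ (p + 1)) := by
  have hu : 0 < x + α / 2 := by linarith
  have hup : (x + α / 2) ^ p ≠ 0 := (rpow_pos_of_pos hu p).ne'
  rw [gammaRatio_add_one (by linarith) hu.ne', rpow_add_one hu.ne']
  generalize (x + α / 2) ^ p = U at hup
  field_simp

variable {m n : ℤ}

lemma gammaRatio_mul_rpow_le_of_le (hα₁ : 1 ≤ α) (hα₂ : α ≤ 2) (hm : α / 2 < m)
    (hmn : m ≤ n) :
    gammaRatio α n * (n + α / 2) ^ α ≤ gammaRatio α m * (m + α / 2) ^ α := by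
  induction n, hmn using Int.leInduction with
  | base => rfl
  | succ n hmn ih =>
    have hn : α / 2 < n := hm.trans_le (by exact_mod_cast hmn)
    have step := sub_mul_add_one_rpow_le hα₁ hα₂ (u := n + α / 2) (by linarith)
    rw [show (n : ℝ) + α / 2 - α = n - α / 2 by ring,
      show (n : ℝ) + α / 2 + 1 = n + 1 + α / 2 by ring] at step
    push_cast
    rw [gammaRatio_add_one_mul_rpow (by linarith) hn]
    refine (mul_le_of_le_one_right ?_ ?_).trans ih
    · exact mul_nonneg (gammaRatio_pos (by linarith) hn).le (rpow_nonneg (by linarith) _)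
    · rwa [div_le_one (rpow_pos_of_pos (by linarith) _)]

lemma le_gammaRatio_mul_rpow_of_le (hα : 0 < α) (hm : α * (2 * α + 1) ≤ (α + 1) * (m + α / 2))
    (hmn : m ≤ n) :
    gammaRatio α m * (m + α / 2) ^ (2 * α + 1)
      ≤ gammaRatio α n * (n + α / 2) ^ (2 * α + 1) := by
  induction n, hmn using Int.leInduction with
  | base => rfl
  | succ n hmn ih =>
    have hmn' : (m : ℝ) ≤ n := by exact_mod_cast hmn
    have hu : α < n + α / 2 := by nlinarith
    have step := rpow_add_one_le_sub_mul_add_one_rpow hα (p := 2 * α + 1) (by linarith) hu.le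
      (by nlinarith)
    rw [show (n : ℝ) + α / 2 - α = n - α / 2 by ring,
      show (n : ℝ) + α / 2 + 1 = n + 1 + α / 2 by ring] at step
    push_cast
    rw [gammaRatio_add_one_mul_rpow hα.le (by linarith)]
    refine ih.trans (le_mul_of_one_le_right ?_ ?_)
    · exact mul_nonneg (gammaRatio_pos hα.le (by linarith)).le (rpow_nonneg (by linarith) _)
    · rwa [one_le_div (rpow_pos_of_pos (by linarith) _)]

lemma tendsto_gammaRatio_add_nat (hα₁ : 1 ≤ α) (hα₂ : α ≤ 2) (hn : α / 2 < n) :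
    Tendsto (fun j : ℕ => gammaRatio α ((n + j : ℤ) : ℝ)) atTop (𝓝 0) := by
  have hnj (j : ℕ) : α / 2 < ((n + j : ℤ) : ℝ) := by
    push_cast
    linarith [(j.cast_nonneg : (0 : ℝ) ≤ j)]
  have hu : Tendsto (fun j : ℕ => ((n + j : ℤ) : ℝ) + α / 2) atTop atTop := by
    push_cast
    exact tendsto_atTop_add_const_right _ _
      (tendsto_atTop_add_const_left _ _ tendsto_natCast_atTop_atTop)
  have hbound (j : ℕ) : gammaRatio α ((n + j : ℤ) : ℝ)
      ≤ gammaRatio α n * (n + α / 2) ^ α * (((n + j : ℤ) : ℝ) + α / 2) ^ (-α) := by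
    rw [rpow_neg (by linarith [hnj j]), ← div_eq_mul_inv,
      le_div_iff₀ (rpow_pos_of_pos (by linarith [hnj j]) _)]
    exact gammaRatio_mul_rpow_le_of_le hα₁ hα₂ hn (by omega)
  refine squeeze_zero (fun j => (gammaRatio_pos (by linarith) (hnj j)).le) hbound ?_
  simpa using ((tendsto_rpow_neg_atTop (by linarith)).comp hu).const_mul
    (gammaRatio α n * (n + α / 2) ^ α)

end GammaRatio

noncomputable def fracCoeffScale (α : ℝ) : ℝ := Gamma (α + 1) * sin (π * (α / 2)) / π

section FracCoeff

variable {α : ℝ} {n : ℤ}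

lemma sin_pi_mul_half_pos (hα₀ : 0 < α) (hα₂ : α < 2) : 0 < sin (π * (α / 2)) :=
  sin_pos_of_pos_of_lt_pi (by positivity) (by nlinarith [pi_pos])

lemma fracCoeffScale_pos (hα₀ : 0 < α) (hα₂ : α < 2) : 0 < fracCoeffScale α := by
  have := sin_pi_mul_half_pos hα₀ hα₂
  unfold fracCoeffScale
  positivity

lemma fracCoeff_eq (hα : sin (π * (α / 2)) ≠ 0) (k : ℤ) :
    fracCoeff α k = -fracCoeffScale α * (Gamma (k - α / 2) / Gamma (k + α / 2 + 1)) := by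
  have hΓ : Gamma (k - α / 2) ≠ 0 := by
    refine Gamma_ne_zero fun m hm => hα ?_
    rw [show α / 2 = ((k + m : ℤ) : ℝ) by push_cast; linarith, mul_comm]
    exact sin_int_mul_pi _
  have hsin : sin (π * (α / 2 - k + 1)) = (-1) ^ (1 - k) * sin (π * (α / 2)) := by
    rw [← sin_add_int_mul_pi]; push_cast; ring_nf
  have hrefl := Gamma_mul_Gamma_one_sub (α / 2 - k + 1)
  rw [show 1 - (α / 2 - k + 1) = k - α / 2 by ring, hsin] at hrefl
  have hsign : (-1 : ℝ) ^ k * (-1) ^ (1 - k) = -1 := by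
    rw [← zpow_add₀ (by norm_num)]; simp
  rw [fracCoeff, fracCoeffScale, eq_div_of_mul_eq hΓ hrefl,
    show α / 2 + (k : ℝ) + 1 = k + α / 2 + 1 by ring]
  generalize Gamma (k - α / 2) = G at hΓ
  generalize sin (π * (α / 2)) = s at hα
  generalize Gamma (k + α / 2 + 1) = H
  have hπ : π ≠ 0 := pi_ne_zero
  field_simp
  linear_combination Gamma (α + 1) / H * hsign

lemma abs_fracCoeff_eq (hα₀ : 0 < α) (hα₂ : α < 2) {k : ℤ} (hk : α / 2 < k) :
    |fracCoeff α k| = fracCoeffScale α / α * (gammaRatio α k - gammaRatio α (k + 1)) := by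
  rw [fracCoeff_eq (sin_pi_mul_half_pos hα₀ hα₂).ne',
    gammaRatio_sub_gammaRatio_add_one (by linarith) (by linarith), abs_mul, abs_neg,
    abs_of_pos (fracCoeffScale_pos hα₀ hα₂),
    abs_of_pos (div_pos (Gamma_pos_of_pos (by linarith)) (Gamma_pos_of_pos (by linarith))),
    ← mul_assoc, div_mul_cancel₀ _ hα₀.ne']

lemma hasSum_abs_fracCoeff (hα₁ : 1 ≤ α) (hα₂ : α < 2) (hn : α / 2 < n) :
    HasSum (fun j : ℕ => |fracCoeff α (n + j)|) (fracCoeffScale α / α * gammaRatio α n) := by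
  set A : ℕ → ℝ := fun j => gammaRatio α ((n + j : ℤ) : ℝ)
  have hc : 0 < fracCoeffScale α / α :=
    div_pos (fracCoeffScale_pos (by linarith) hα₂) (by linarith)
  have hterm (j : ℕ) : |fracCoeff α (n + j)| = fracCoeffScale α / α * (A j - A (j + 1)) := by
    rw [abs_fracCoeff_eq (by linarith) hα₂
      (by push_cast; linarith [(j.cast_nonneg : (0 : ℝ) ≤ j)])]
    simp only [A]
    push_cast
    ring_nf
  have hanti : Antitone A := antitone_nat_of_succ_le fun j =>
    sub_nonneg.1 <| (mul_nonneg_iff_of_pos_left hc).1 (hterm j ▸ abs_nonneg _)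
  have h := (hasSum_sub_succ_of_antitone hanti
    (tendsto_gammaRatio_add_nat hα₁ hα₂.le hn)).mul_left (fracCoeffScale α / α)
  rw [← funext hterm] at h
  simpa [A] using h

lemma Scoeff_eq_neg_fracCoeff_two : Scoeff α = -fracCoeff α 2 := by
  rw [Scoeff, fracCoeff]
  norm_num
  ring_nf

lemma fracCoeffScale_mul_gammaRatio_three (hα₀ : 0 < α) (hα₂ : α < 2) :
    fracCoeffScale α * gammaRatio α 3 = (2 - α / 2) * Scoeff α := by
  have h3 : Gamma (3 - α / 2) = (2 - α / 2) * Gamma (2 - α / 2) := by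
    rw [← Gamma_add_one (by linarith)]
    ring_nf
  rw [Scoeff_eq_neg_fracCoeff_two, fracCoeff_eq (sin_pi_mul_half_pos hα₀ hα₂).ne', gammaRatio,
    h3]
  push_cast
  ring_nf

lemma Scoeff_pos_s2 (hα₀ : 0 < α) (hα₂ : α < 2) : 0 < Scoeff α := by
  have h := fracCoeffScale_mul_gammaRatio_three hα₀ hα₂
  have : 0 < fracCoeffScale α * gammaRatio α 3 :=
    mul_pos (fracCoeffScale_pos hα₀ hα₂) (gammaRatio_pos hα₀.le (by linarith))
  exact pos_of_mul_pos_right (h ▸ this) (by linarith)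

lemma fracCoeffScale_div_mul_gammaRatio_lt (hα₁ : 1 ≤ α) (hα₂ : α < 2) (hn : 3 ≤ n) :
    fracCoeffScale α / α * gammaRatio α n
      < Scoeff α * (α + 2 * n) ^ (-α) * (α + 6) ^ (α + 1) / (2 * α) := by
  have hn' : (3 : ℝ) ≤ n := by exact_mod_cast hn
  have hu : 0 < (n : ℝ) + α / 2 := by linarith
  have hS := Scoeff_pos_s2 (by linarith) hα₂
  have key : fracCoeffScale α * (gammaRatio α n * (n + α / 2) ^ α)
      < Scoeff α * (3 + α / 2) ^ (α + 1) :=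
    calc fracCoeffScale α * (gammaRatio α n * (n + α / 2) ^ α)
        ≤ fracCoeffScale α * (gammaRatio α 3 * (3 + α / 2) ^ α) := by
          refine mul_le_mul_of_nonneg_left ?_ (fracCoeffScale_pos (by linarith) hα₂).le
          exact_mod_cast gammaRatio_mul_rpow_le_of_le hα₁ hα₂.le (m := 3)
            (by push_cast; linarith) hn
      _ = (2 - α / 2) * Scoeff α * (3 + α / 2) ^ α := by
          rw [← mul_assoc, fracCoeffScale_mul_gammaRatio_three (by linarith) hα₂]
      _ < (3 + α / 2) * Scoeff α * (3 + α / 2) ^ α := by gcongr; linarith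
      _ = Scoeff α * (3 + α / 2) ^ (α + 1) := by rw [rpow_add_one (by positivity)]; ring
  rw [show α + 2 * (n : ℝ) = 2 * (n + α / 2) by ring, show α + 6 = 2 * (3 + α / 2) by ring,
    mul_assoc (Scoeff α), two_mul_rpow_neg_mul_two_mul_rpow_add_one hu (by positivity)]
  have hU : 0 < ((n : ℝ) + α / 2) ^ α := rpow_pos_of_pos hu α
  calc fracCoeffScale α / α * gammaRatio α n
      = fracCoeffScale α * (gammaRatio α n * (n + α / 2) ^ α) / (n + α / 2) ^ α / α := by
        field_simp
    _ < Scoeff α * (3 + α / 2) ^ (α + 1) / (n + α / 2) ^ α / α := by gcongr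
    _ = _ := by field_simp

lemma lt_fracCoeffScale_div_mul_gammaRatio (hα₁ : 1 ≤ α) (hα₂ : α < 2) (hn : 3 ≤ n) :
    Scoeff α * (α + 2 * n) ^ (-(2 * α + 1)) * (α + 4) ^ (2 * (α + 1)) / (2 * (2 * α + 1))
      < fracCoeffScale α / α * gammaRatio α n := by
  have hn' : (3 : ℝ) ≤ n := by exact_mod_cast hn
  have hu : 0 < (n : ℝ) + α / 2 := by linarith
  have hS := Scoeff_pos_s2 (by linarith) hα₂
  have key : Scoeff α * (α * (2 + α / 2) ^ (2 * α + 1 + 1) / (2 * α + 1))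
      < fracCoeffScale α * (gammaRatio α n * (n + α / 2) ^ (2 * α + 1)) :=
    calc Scoeff α * (α * (2 + α / 2) ^ (2 * α + 1 + 1) / (2 * α + 1))
        < Scoeff α * ((2 - α / 2) * (3 + α / 2) ^ (2 * α + 1)) := by
          rw [show 2 * α + 1 + 1 = 2 * α + 2 by ring]
          gcongr
          exact mul_rpow_div_lt_sub_mul_rpow hα₁ hα₂.le
      _ = fracCoeffScale α * (gammaRatio α 3 * (3 + α / 2) ^ (2 * α + 1)) := by
          rw [← mul_assoc, mul_comm (Scoeff α),
            ← fracCoeffScale_mul_gammaRatio_three (by linarith) hα₂, mul_assoc]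
      _ ≤ fracCoeffScale α * (gammaRatio α n * (n + α / 2) ^ (2 * α + 1)) := by
          refine mul_le_mul_of_nonneg_left ?_ (fracCoeffScale_pos (by linarith) hα₂).le
          exact_mod_cast le_gammaRatio_mul_rpow_of_le (by linarith) (m := 3)
            (by push_cast; nlinarith) hn
  rw [show α + 2 * (n : ℝ) = 2 * (n + α / 2) by ring, show α + 4 = 2 * (2 + α / 2) by ring,
    show 2 * (α + 1) = 2 * α + 1 + 1 by ring, mul_assoc (Scoeff α),
    two_mul_rpow_neg_mul_two_mul_rpow_add_one hu (by positivity)]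
  have hU : 0 < ((n : ℝ) + α / 2) ^ (2 * α + 1) := rpow_pos_of_pos hu _
  calc _ = Scoeff α * (α * (2 + α / 2) ^ (2 * α + 1 + 1) / (2 * α + 1))
        / (n + α / 2) ^ (2 * α + 1) / α := by
        field_simp
    _ < fracCoeffScale α * (gammaRatio α n * (n + α / 2) ^ (2 * α + 1))
        / (n + α / 2) ^ (2 * α + 1) / α := by gcongr
    _ = fracCoeffScale α / α * gammaRatio α n := by field_simp

end FracCoeff

theorem fracCoeff_tail_sum_bound (α : ℝ) (hα1 : 1 < α) (hα2 : α < 2)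
    (n : ℤ) (hn : 3 ≤ n) :
    Summable (fun j : ℕ => |fracCoeff α (n + j)|) ∧
    Scoeff α * (α + 2 * (n : ℝ)) ^ (-(2 * α + 1)) * (α + 4) ^ (2 * (α + 1))
        / (2 * (2 * α + 1))
      < ∑' j : ℕ, |fracCoeff α (n + j)| ∧
    ∑' j : ℕ, |fracCoeff α (n + j)|
      < Scoeff α * (α + 2 * (n : ℝ)) ^ (-α) * (α + 6) ^ (α + 1) / (2 * α) := by
  have hn' : (3 : ℝ) ≤ n := by exact_mod_cast hn
  have hsum := hasSum_abs_fracCoeff hα1.le hα2 (n := n) (by linarith)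
  rw [hsum.tsum_eq]
  exact ⟨hsum.summable, lt_fracCoeffScale_div_mul_gammaRatio hα1.le hα2 hn,
    fracCoeffScale_div_mul_gammaRatio_lt hα1.le hα2 hn⟩
end

section
/- For every real α with 1 < α < 2: g_0^{(α)} = Γ(α+1)/Γ(α/2+1)² > 0, and for every integer k the recursion g_k^{(α)} = (1 − (α+1)/(α/2 + k)) · g_{k−1}^{(α)} holds; moreover g_k^{(α)} < 0 for every integer k with k ≠ 0. -/
/-!
Since `Γ(s + 1) = s Γ(s)`, consecutive coefficients have ratio
`g_k / g_{k-1} = -(α/2 - k + 1) / (α/2 + k)`, which for `0 < α < 2` is negative at `k = 1` and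
positive for `k ≥ 2`. Together with `g_0 > 0` this makes `g_k` negative for all `k ≥ 1`, and the
symmetry `g_{-k} = g_k` covers negative `k`.
-/

open Real

lemma half_add_intCast_ne_zero {α : ℝ} (h0 : 0 < α) (h2 : α < 2) (n : ℤ) :
    α / 2 + n ≠ 0 := by
  intro h
  have hpos : (0 : ℤ) < -n := by exact_mod_cast (by push_cast; linarith : ((0 : ℤ) : ℝ) < -n)
  have hlt : -n < (1 : ℤ) := by exact_mod_cast (by push_cast; linarith : ((-n : ℤ) : ℝ) < 1)
  omega

lemma Gamma_half_add_intCast_ne_zero {α : ℝ} (hα : ∀ n : ℤ, α / 2 + n ≠ 0) (n : ℤ) :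
    Gamma (α / 2 + n) ≠ 0 :=
  Gamma_ne_zero fun m h => hα (n + m) (by push_cast; linarith)

lemma fracCoeff_zero (α : ℝ) : fracCoeff α 0 = Gamma (α + 1) / Gamma (α / 2 + 1) ^ 2 := by
  simp [fracCoeff, sq]

lemma fracCoeff_zero_pos {α : ℝ} (hα : -1 < α) : 0 < fracCoeff α 0 := by
  rw [fracCoeff_zero]
  have := Gamma_pos_of_pos (show 0 < α / 2 + 1 by linarith)
  exact div_pos (Gamma_pos_of_pos (by linarith)) (by positivity)

lemma fracCoeff_neg_eq (α : ℝ) (k : ℤ) : fracCoeff α (-k) = fracCoeff α k := by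
  rw [fracCoeff, fracCoeff, ← inv_zpow', inv_neg_one, Int.cast_neg, sub_neg_eq_add,
    ← sub_eq_add_neg, mul_comm (Gamma _)]

lemma fracCoeff_eq_mul_fracCoeff_sub_one {α : ℝ} (hα : ∀ n : ℤ, α / 2 + n ≠ 0) (k : ℤ) :
    fracCoeff α k = (1 - (α + 1) / (α / 2 + k)) * fracCoeff α (k - 1) := by
  have hlo : α / 2 - k + 1 = α / 2 + ((1 - k : ℤ) : ℝ) := by push_cast; ring
  have ha : α / 2 - k + 1 ≠ 0 := hlo ▸ hα (1 - k)
  have hb : α / 2 + k ≠ 0 := hα k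
  have hΓa : Gamma (α / 2 - k + 1) ≠ 0 := hlo ▸ Gamma_half_add_intCast_ne_zero hα (1 - k)
  have hΓb : Gamma (α / 2 + k) ≠ 0 := Gamma_half_add_intCast_ne_zero hα k
  have hprev_lo : Gamma (α / 2 - ((k - 1 : ℤ) : ℝ) + 1) =
      (α / 2 - k + 1) * Gamma (α / 2 - k + 1) := by
    rw [← Gamma_add_one ha]; push_cast; ring_nf
  have hprev_hi : Gamma (α / 2 + ((k - 1 : ℤ) : ℝ) + 1) = Gamma (α / 2 + k) := by
    push_cast; ring_nf
  have hsign : (-1 : ℝ) ^ (k - 1) = -(-1) ^ k := by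
    rw [zpow_sub_one₀ (by norm_num), inv_neg_one, mul_neg_one]
  have hfactor : 1 - (α + 1) / (α / 2 + k) = -(α / 2 - k + 1) / (α / 2 + k) := by
    rw [eq_div_iff hb, sub_mul, div_mul_cancel₀ _ hb]; ring
  rw [fracCoeff, fracCoeff, hprev_lo, hprev_hi, hsign, hfactor, Gamma_add_one hb]
  generalize Gamma (α / 2 - k + 1) = A at hΓa ⊢
  generalize Gamma (α / 2 + k) = B at hΓb ⊢
  generalize α / 2 - k + 1 = a at ha ⊢
  generalize α / 2 + k = b at hb ⊢
  field_simp

lemma fracCoeff_natCast_add_one_neg {α : ℝ} (h0 : 0 < α) (h2 : α < 2) (n : ℕ) :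
    fracCoeff α (n + 1) < 0 := by
  have hrec := fracCoeff_eq_mul_fracCoeff_sub_one (half_add_intCast_ne_zero h0 h2)
  induction n with
  | zero =>
    have hfactor : 1 - (α + 1) / (α / 2 + 1) < 0 := by
      rw [sub_neg, one_lt_div (by linarith)]; linarith
    simpa [hrec 1] using mul_neg_of_neg_of_pos hfactor (fracCoeff_zero_pos (by linarith))
  | succ n ih =>
    have hfactor : 0 < 1 - (α + 1) / (α / 2 + (n + 2)) := by
      have : (0 : ℝ) ≤ n := n.cast_nonneg
      rw [sub_pos, div_lt_one (by positivity)]; linarith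
    rw [hrec, show ((n + 1 : ℕ) : ℤ) + 1 - 1 = n + 1 by push_cast; ring]
    push_cast
    rw [add_assoc, one_add_one_eq_two]
    exact mul_neg_of_pos_of_neg hfactor ih

lemma fracCoeff_neg_of_ne_zero {α : ℝ} (h0 : 0 < α) (h2 : α < 2) {k : ℤ} (hk : k ≠ 0) :
    fracCoeff α k < 0 := by
  obtain ⟨n, hn⟩ := Nat.exists_eq_add_one_of_ne_zero (Int.natAbs_ne_zero.mpr hk)
  rcases Int.natAbs_eq k with h | h
  · rw [h, hn]; exact_mod_cast fracCoeff_natCast_add_one_neg h0 h2 n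
  · rw [h, fracCoeff_neg_eq, hn]; exact_mod_cast fracCoeff_natCast_add_one_neg h0 h2 n

theorem fracCoeff_zero_pos_recursion_neg (α : ℝ) (hα1 : 1 < α) (hα2 : α < 2) :
    fracCoeff α 0 = Real.Gamma (α + 1) / (Real.Gamma (α / 2 + 1)) ^ 2 ∧
    0 < fracCoeff α 0 ∧
    (∀ k : ℤ, fracCoeff α k = (1 - (α + 1) / (α / 2 + (k : ℝ))) * fracCoeff α (k - 1)) ∧
    (∀ k : ℤ, k ≠ 0 → fracCoeff α k < 0) := by
  have h0 : 0 < α := by linarith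
  exact ⟨fracCoeff_zero α, fracCoeff_zero_pos (by linarith),
    fracCoeff_eq_mul_fracCoeff_sub_one (half_add_intCast_ne_zero h0 hα2),
    fun _ hk => fracCoeff_neg_of_ne_zero h0 hα2 hk⟩
end

section
/- For every real α with 1 < α < 2, the central fractional centred difference coefficient satisfies the two-sided bound 2^{1+α}/((1+α)·π) ≤ Γ(α+1)/Γ(α/2+1)² ≤ 2^{1+α}/π. -/
/-!
By the duplication formula, `Γ(α + 1) / Γ(α/2 + 1)² = (2^(1+α) / π) · Γ(3/2) Γ(s) / Γ(s + 1/2)`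
with `s = (α + 1)/2`. Log-convexity of `Γ` gives `Γ(x) Γ(y) ≤ Γ(a) Γ(b)` whenever `x, y ∈ [a, b]`
and `x + y = a + b`; applied to `s + 3/2 = 1 + (s + 1/2)` and
`(s + 1/2) + 2 = 3/2 + (s + 1)` it squeezes `Γ(s + 1/2)` between `Γ(3/2) Γ(s)` and
`Γ(3/2) Γ(s + 1)` for `s ≥ 1`, so the last factor lies in `[1/s, 1]`, and `1/s ≥ 1/(1 + α)`.
-/

open Real

theorem ConvexOn.add_le_add_of_add_eq {𝕜 : Type*} [Field 𝕜] [LinearOrder 𝕜]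
    [IsStrictOrderedRing 𝕜] {s : Set 𝕜} {f : 𝕜 → 𝕜} (hf : ConvexOn 𝕜 s f) {a b x y : 𝕜}
    (ha : a ∈ s) (hb : b ∈ s) (hax : a ≤ x) (hxb : x ≤ b) (hsum : x + y = a + b) :
    f x + f y ≤ f a + f b := by
  obtain rfl | hab := (hax.trans hxb).eq_or_lt
  · obtain rfl : x = a := le_antisymm hxb hax
    obtain rfl : y = x := by linarith
    rfl
  have hba : 0 < b - a := sub_pos.2 hab
  have hμ : 0 ≤ (b - x) / (b - a) := div_nonneg (by linarith) hba.le
  have hν : 0 ≤ (x - a) / (b - a) := div_nonneg (by linarith) hba.le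
  have hμν : (b - x) / (b - a) + (x - a) / (b - a) = 1 := by field_simp; ring
  have hx := hf.2 ha hb hμ hν hμν
  have hy := hf.2 ha hb hν hμ (by rw [add_comm, hμν])
  have hx_eq : ((b - x) / (b - a)) • a + ((x - a) / (b - a)) • b = x := by
    simp only [smul_eq_mul]; field_simp; ring
  have hy_eq : ((x - a) / (b - a)) • a + ((b - x) / (b - a)) • b = y := by
    rw [show y = a + b - x by linarith]
    simp only [smul_eq_mul]; field_simp; ring
  rw [hx_eq] at hx
  rw [hy_eq] at hy
  simp only [smul_eq_mul] at hx hy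
  linear_combination hx + hy + (f a + f b) * hμν

namespace Real

theorem Gamma_mul_Gamma_le_of_add_eq {a b x y : ℝ} (ha : 0 < a) (hax : a ≤ x) (hxb : x ≤ b)
    (hsum : x + y = a + b) : Gamma x * Gamma y ≤ Gamma a * Gamma b := by
  have hb : 0 < b := by linarith
  have hlog := convexOn_log_Gamma.add_le_add_of_add_eq (Set.mem_Ioi.2 ha) (Set.mem_Ioi.2 hb)
    hax hxb hsum
  have hΓx := Gamma_pos_of_pos (s := x) (by linarith)
  have hΓy := Gamma_pos_of_pos (s := y) (by linarith)
  have hΓa := Gamma_pos_of_pos ha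
  have hΓb := Gamma_pos_of_pos hb
  simp only [Function.comp_apply] at hlog
  rwa [← log_mul hΓx.ne' hΓy.ne', ← log_mul hΓa.ne' hΓb.ne',
    log_le_log_iff (mul_pos hΓx hΓy) (mul_pos hΓa hΓb)] at hlog

theorem Gamma_three_div_two : Gamma (3 / 2) = √π / 2 := by
  rw [show (3 / 2 : ℝ) = 1 / 2 + 1 by norm_num, Gamma_add_one (by norm_num), Gamma_one_half_eq]
  ring

theorem Gamma_three_div_two_mul_Gamma_le_Gamma_add_half {s : ℝ} (hs : 1 ≤ s) :
    Gamma (3 / 2) * Gamma s ≤ Gamma (s + 1 / 2) := by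
  have h := Gamma_mul_Gamma_le_of_add_eq one_pos hs (by linarith : s ≤ s + 1 / 2)
    (y := 3 / 2) (by ring)
  rwa [Gamma_one, one_mul, mul_comm] at h

theorem Gamma_add_half_le_Gamma_three_div_two_mul_Gamma_add_one {s : ℝ} (hs : 1 ≤ s) :
    Gamma (s + 1 / 2) ≤ Gamma (3 / 2) * Gamma (s + 1) := by
  have h := Gamma_mul_Gamma_le_of_add_eq (by norm_num : (0 : ℝ) < 3 / 2)
    (by linarith : 3 / 2 ≤ s + 1 / 2) (by linarith : s + 1 / 2 ≤ s + 1) (y := 2) (by ring)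
  rwa [Gamma_two, mul_one] at h

theorem Gamma_three_div_two_mul_Gamma_div_Gamma_add_half_mem_Icc {s : ℝ} (hs : 1 ≤ s) :
    Gamma (3 / 2) * Gamma s / Gamma (s + 1 / 2) ∈ Set.Icc s⁻¹ 1 := by
  have hΓs := Gamma_pos_of_pos (by linarith : 0 < s)
  have hΓ := Gamma_pos_of_pos (by linarith : 0 < s + 1 / 2)
  have hupper := Gamma_add_half_le_Gamma_three_div_two_mul_Gamma_add_one hs
  rw [Gamma_add_one (by linarith)] at hupper
  refine ⟨?_, (div_le_one hΓ).2 (Gamma_three_div_two_mul_Gamma_le_Gamma_add_half hs)⟩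
  rw [inv_eq_one_div, div_le_div_iff₀ (by linarith) hΓ]
  linarith

theorem Gamma_add_one_div_Gamma_half_add_one_sq (α : ℝ) :
    Gamma (α + 1) / Gamma (α / 2 + 1) ^ 2 =
      2 ^ (1 + α) / π * (Gamma (3 / 2) * Gamma ((α + 1) / 2) / Gamma (α / 2 + 1)) := by
  have hdup := Gamma_mul_Gamma_add_half ((α + 1) / 2)
  rw [show (α + 1) / 2 + 1 / 2 = α / 2 + 1 by ring, show 2 * ((α + 1) / 2) = α + 1 by ring,
    show 1 - (α + 1) = -α by ring, rpow_neg zero_le_two] at hdup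
  rcases eq_or_ne (Gamma (α / 2 + 1)) 0 with h0 | h0
  · simp [h0]
  have hπ : √π ^ 2 = π := sq_sqrt pi_pos.le
  have hΓ : Gamma (α + 1) = Gamma ((α + 1) / 2) * Gamma (α / 2 + 1) * 2 ^ α / √π := by
    rw [hdup]; field_simp
  rw [hΓ, Gamma_three_div_two, rpow_add two_pos, rpow_one]
  field_simp
  rw [hπ]

end Real

theorem central_coeff_two_sided_bound_general (α : ℝ) (hα1 : 1 < α) :
    2 ^ (1 + α) / ((1 + α) * π) ≤ Real.Gamma (α + 1) / (Real.Gamma (α / 2 + 1)) ^ 2 ∧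
    Real.Gamma (α + 1) / (Real.Gamma (α / 2 + 1)) ^ 2 ≤ 2 ^ (1 + α) / π := by
  obtain ⟨hlower, hupper⟩ :=
    Gamma_three_div_two_mul_Gamma_div_Gamma_add_half_mem_Icc (s := (α + 1) / 2) (by linarith)
  rw [show (α + 1) / 2 + 1 / 2 = α / 2 + 1 by ring] at hlower hupper
  have hinv : (1 + α)⁻¹ ≤ ((α + 1) / 2)⁻¹ := by
    rw [inv_div, add_comm, inv_eq_one_div]
    exact div_le_div_of_nonneg_right one_le_two (by linarith)
  rw [Gamma_add_one_div_Gamma_half_add_one_sq, div_mul_eq_div_div_swap,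
    div_eq_mul_inv (2 ^ (1 + α) / π)]
  exact ⟨mul_le_mul_of_nonneg_left (hinv.trans hlower) (by positivity),
    mul_le_of_le_one_right (by positivity) hupper⟩

theorem central_coeff_two_sided_bound (α : ℝ) (hα1 : 1 < α) (hα2 : α < 2) :
    2 ^ (1 + α) / ((1 + α) * π) ≤ Real.Gamma (α + 1) / (Real.Gamma (α / 2 + 1)) ^ 2 ∧
    Real.Gamma (α + 1) / (Real.Gamma (α / 2 + 1)) ^ 2 ≤ 2 ^ (1 + α) / π :=
  central_coeff_two_sided_bound_general α hα1
end

section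
/- For every real α with 1 < α < 2 and every integer k ≥ 1, the fractional centred difference coefficient admits the representation g_k^{(α)} = −(sin(πα/2)/π) · Γ(α+1) · Γ(k − α/2) / Γ(α/2 + k + 1). -/
open Real

/-! Euler's reflection formula `Γ(z) Γ(1 - z) = π / sin(π z)` with `z = k - α/2` turns the
factor `1 / Γ(α/2 - k + 1)` into `Γ(k - α/2) sin(π (k - α/2)) / π`, and
`sin(π (k - α/2)) = -(-1)^k sin(π α / 2)` cancels the sign `(-1)^k`. -/

lemma Real.inv_Gamma_one_sub_of_sin_ne_zero {s : ℝ} (hs : sin (π * s) ≠ 0) :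
    (Gamma (1 - s))⁻¹ = Gamma s * sin (π * s) / π := by
  refine inv_eq_of_mul_eq_one_left ?_
  rw [div_mul_eq_mul_div, mul_right_comm, Gamma_mul_Gamma_one_sub, div_mul_cancel₀ _ hs,
    div_self pi_ne_zero]

lemma fracCoeff_eq_of_sin_ne_zero (α : ℝ) (k : ℤ) (hα : sin (π * α / 2) ≠ 0) :
    fracCoeff α k =
      -(sin (π * α / 2) / π) * Gamma (α + 1) * Gamma (k - α / 2) / Gamma (α / 2 + k + 1) := by
  have hsin : sin (π * (k - α / 2)) = -((-1) ^ k * sin (π * α / 2)) := by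
    rw [← sin_int_mul_pi_sub]
    ring_nf
  have hsign : ((-1 : ℝ) ^ k) ^ 2 = 1 := by
    rw [← zpow_natCast, ← zpow_mul, mul_comm, zpow_mul]
    norm_num
  have hinv := inv_Gamma_one_sub_of_sin_ne_zero (s := k - α / 2)
    (by simp [hsin, hα, zpow_ne_zero])
  rw [hsin, show 1 - (k - α / 2) = α / 2 - k + 1 by ring] at hinv
  rw [fracCoeff, mul_comm (Gamma _), ← div_div, div_eq_mul_inv _ (Gamma (α / 2 - k + 1)), hinv]
  linear_combination -(Gamma (α + 1) * Gamma (k - α / 2) * sin (π * α / 2) / π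
    / Gamma (α / 2 + k + 1)) * hsign

theorem fracCoeff_sin_Gamma_repr_general (α : ℝ) (hα1 : 1 < α) (hα2 : α < 2)
    (k : ℤ) :
    fracCoeff α k =
      -(Real.sin (π * α / 2) / π) * Real.Gamma (α + 1) *
        Real.Gamma ((k : ℝ) - α / 2) / Real.Gamma (α / 2 + (k : ℝ) + 1) :=
  fracCoeff_eq_of_sin_ne_zero α k
    (sin_pos_of_pos_of_lt_pi (by nlinarith [pi_pos]) (by nlinarith [pi_pos])).ne'

theorem fracCoeff_sin_Gamma_repr (α : ℝ) (hα1 : 1 < α) (hα2 : α < 2)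
    (k : ℤ) (hk : 1 ≤ k) :
    fracCoeff α k =
      -(Real.sin (π * α / 2) / π) * Real.Gamma (α + 1) *
        Real.Gamma ((k : ℝ) - α / 2) / Real.Gamma (α / 2 + (k : ℝ) + 1) :=
  fracCoeff_sin_Gamma_repr_general α hα1 hα2 k
end

section
/- As α → 2 from below, the fractional centred difference coefficients converge to the coefficients of the classical second-order centred difference: lim_{α→2⁻} g_0^{(α)} = 2, lim_{α→2⁻} g_k^{(α)} = −1 for |k| = 1, and lim_{α→2⁻} g_k^{(α)} = 0 for every integer k with |k| ≥ 2. -/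
/-! The reciprocal Gamma function is entire and `Γ(α + 1)` is continuous near `α = 2`, so
`α ↦ g_k^{(α)}` is continuous at `2` and the one-sided limit is the value at `2`:
`g_k^{(2)} = (-1)^k · 2 / (Γ(2 - k) Γ(2 + k))`. This is `2` for `k = 0`, `-1` for `|k| = 1`,
and `0` for `|k| ≥ 2`, where one of the two factors of the denominator is `Γ` at a
nonpositive integer, i.e. `0` by Mathlib's convention. -/

open Real

open Filter Topology

namespace Real

theorem continuous_inv_Gamma : Continuous fun x : ℝ => (Gamma x)⁻¹ := by
  have h : (fun x : ℝ => (Gamma x)⁻¹) = fun x : ℝ => ((Complex.Gamma x)⁻¹).re := by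
    funext x
    rw [Complex.Gamma_ofReal, ← Complex.ofReal_inv, Complex.ofReal_re]
  rw [h]
  exact Complex.continuous_re.comp
    (Complex.differentiable_one_div_Gamma.continuous.comp Complex.continuous_ofReal)

theorem Gamma_intCast_of_nonpos {n : ℤ} (hn : n ≤ 0) : Gamma n = 0 := by
  obtain ⟨m, rfl⟩ := Int.exists_eq_neg_ofNat hn
  simpa using Gamma_neg_nat_eq_zero m

end Real

theorem continuousAt_fracCoeff {α : ℝ} (hα : -1 < α) (k : ℤ) :
    ContinuousAt (fun β : ℝ => fracCoeff β k) α := by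
  have hΓ : ContinuousAt (fun β : ℝ => Gamma (β + 1)) α := by
    refine (differentiableAt_Gamma fun m hm => ?_).continuousAt.comp (by fun_prop)
    linarith [(Nat.cast_nonneg m : (0 : ℝ) ≤ m)]
  have hinvΓ (c : ℝ) : Continuous fun β : ℝ => (Gamma (β / 2 + c))⁻¹ :=
    continuous_inv_Gamma.comp (by fun_prop)
  have hform : (fun β : ℝ => fracCoeff β k) = fun β : ℝ =>
      (-1 : ℝ) ^ k * Gamma (β + 1) *
        ((Gamma (β / 2 + (1 - k)))⁻¹ * (Gamma (β / 2 + (k + 1)))⁻¹) := by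
    funext β
    rw [fracCoeff, div_eq_mul_inv, mul_inv]
    ring_nf
  rw [hform]
  exact (continuousAt_const.mul hΓ).mul ((hinvΓ _).continuousAt.mul (hinvΓ _).continuousAt)

theorem fracCoeff_two_s13 (k : ℤ) :
    fracCoeff 2 k = (-1 : ℝ) ^ k * 2 / (Gamma ((2 - k : ℤ) : ℝ) * Gamma ((2 + k : ℤ) : ℝ)) := by
  rw [fracCoeff]
  push_cast
  norm_num
  ring_nf

theorem fracCoeff_two_zero : fracCoeff 2 0 = 2 := by
  norm_num [fracCoeff_two_s13]

theorem fracCoeff_two_of_abs_eq_one {k : ℤ} (hk : |k| = 1) : fracCoeff 2 k = -1 := by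
  rcases abs_eq_abs.mp (hk.trans abs_one.symm) with rfl | rfl <;> norm_num [fracCoeff_two_s13]

theorem fracCoeff_two_of_two_le_abs {k : ℤ} (hk : 2 ≤ |k|) : fracCoeff 2 k = 0 := by
  rw [fracCoeff_two_s13]
  rcases le_abs'.mp hk with hneg | hpos
  · rw [Gamma_intCast_of_nonpos (by omega : 2 + k ≤ 0), mul_zero, div_zero]
  · rw [Gamma_intCast_of_nonpos (by omega : 2 - k ≤ 0), zero_mul, div_zero]

theorem fracCoeff_tendsto_classical (k : ℤ) :
    (k = 0 →
      Filter.Tendsto (fun α : ℝ => fracCoeff α k) (nhdsWithin 2 (Set.Iio 2)) (nhds 2)) ∧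
    (|k| = 1 →
      Filter.Tendsto (fun α : ℝ => fracCoeff α k) (nhdsWithin 2 (Set.Iio 2)) (nhds (-1))) ∧
    (2 ≤ |k| →
      Filter.Tendsto (fun α : ℝ => fracCoeff α k) (nhdsWithin 2 (Set.Iio 2)) (nhds 0)) := by
  have hlim : Tendsto (fun α : ℝ => fracCoeff α k) (𝓝[<] 2) (𝓝 (fracCoeff 2 k)) :=
    (continuousAt_fracCoeff (by norm_num) k).tendsto.mono_left nhdsWithin_le_nhds
  refine ⟨?_, fun hk => ?_, fun hk => ?_⟩
  · rintro rfl
    rwa [fracCoeff_two_zero] at hlim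
  · rwa [fracCoeff_two_of_abs_eq_one hk] at hlim
  · rwa [fracCoeff_two_of_two_le_abs hk] at hlim
end

section
/- Let 1 < α < 2, let M ≥ 2 be an integer, and let v_0, v_1, …, v_M be real numbers with v_0 = v_M = 0. Then the compact operator I + (α/24)δ² is a contraction in the Euclidean norm: Σ_{j=1}^{M−1} (v_j + (α/24)(v_{j+1} − 2v_j + v_{j−1}))² ≤ Σ_{j=1}^{M−1} v_j². -/
/-!
Write `∇v j = v j - v (j - 1)`, so that `δ²v j = ∇v (j + 1) - ∇v j`. Summation by parts with
zero boundary values gives `∑ v j δ²v j = -T`, where `T = ∑ (∇v j)²`, and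
`(a - b)² ≤ 2a² + 2b²` gives `∑ (δ²v j)² ≤ 4T`. Expanding the square, for `c = α / 24`,
`∑ (v j + c δ²v j)² ≤ ∑ (v j)² - 2c (1 - 2c) T`, and `2c (1 - 2c) ≥ 0` as soon as `0 ≤ c ≤ 1/2`.
-/

open Finset

section FiniteDifferences

variable {R : Type*}

def backwardDiff [Sub R] (v : ℕ → R) (j : ℕ) : R := v j - v (j - 1)

def secondDiff [Ring R] (v : ℕ → R) (j : ℕ) : R := v (j + 1) - 2 * v j + v (j - 1)

lemma secondDiff_eq_sub_backwardDiff [Ring R] (v : ℕ → R) (j : ℕ) :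
    secondDiff v j = backwardDiff v (j + 1) - backwardDiff v j := by
  simp only [secondDiff, backwardDiff, Nat.add_sub_cancel, two_mul]
  abel

lemma sum_mul_secondDiff [CommRing R] (v : ℕ → R) (n : ℕ) :
    ∑ j ∈ Icc 1 n, v j * secondDiff v j =
      v (n + 1) * backwardDiff v (n + 1) - v 0 * backwardDiff v 1 -
        ∑ j ∈ Icc 1 (n + 1), backwardDiff v j ^ 2 := by
  induction n with
  | zero => simp [backwardDiff]; ring
  | succ n ih =>
    rw [sum_Icc_succ_top (by omega), sum_Icc_succ_top (by omega : 1 ≤ n + 2), ih]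
    simp only [secondDiff, backwardDiff, Nat.add_sub_cancel]
    ring

lemma sum_mul_secondDiff_of_boundary_eq_zero [CommRing R] {v : ℕ → R} {n : ℕ}
    (h0 : v 0 = 0) (hn : v (n + 1) = 0) :
    ∑ j ∈ Icc 1 n, v j * secondDiff v j = -∑ j ∈ Icc 1 (n + 1), backwardDiff v j ^ 2 := by
  rw [sum_mul_secondDiff, h0, hn]
  ring

variable [CommRing R] [LinearOrder R] [IsStrictOrderedRing R]

lemma sum_sq_secondDiff_le (v : ℕ → R) (n : ℕ) :
    ∑ j ∈ Icc 1 n, secondDiff v j ^ 2 ≤ 4 * ∑ j ∈ Icc 1 (n + 1), backwardDiff v j ^ 2 := by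
  set T := ∑ j ∈ Icc 1 (n + 1), backwardDiff v j ^ 2
  have h_shifted : ∑ j ∈ Icc 1 n, backwardDiff v (j + 1) ^ 2 ≤ T := by
    have h_reindex : ∑ j ∈ Icc 1 n, backwardDiff v (j + 1) ^ 2 =
        ∑ j ∈ Icc (1 + 1) (n + 1), backwardDiff v j ^ 2 := by
      rw [← map_add_right_Icc, sum_map]
      rfl
    rw [h_reindex]
    exact sum_le_sum_of_subset_of_nonneg (Icc_subset_Icc_left (by omega))
      fun _ _ _ ↦ sq_nonneg _
  have h_unshifted : ∑ j ∈ Icc 1 n, backwardDiff v j ^ 2 ≤ T :=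
    sum_le_sum_of_subset_of_nonneg (Icc_subset_Icc_right (by omega)) fun _ _ _ ↦ sq_nonneg _
  calc ∑ j ∈ Icc 1 n, secondDiff v j ^ 2
      ≤ ∑ j ∈ Icc 1 n, 2 * (backwardDiff v (j + 1) ^ 2 + backwardDiff v j ^ 2) := by
        refine sum_le_sum fun j _ ↦ ?_
        rw [secondDiff_eq_sub_backwardDiff, sub_eq_add_neg, ← neg_sq (backwardDiff v j)]
        exact add_sq_le
    _ = 2 * (∑ j ∈ Icc 1 n, backwardDiff v (j + 1) ^ 2 + ∑ j ∈ Icc 1 n, backwardDiff v j ^ 2) := by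
        rw [← sum_add_distrib, mul_sum]
    _ ≤ 4 * T := by linarith

end FiniteDifferences

theorem sum_sq_add_mul_secondDiff_le {R : Type*} [Field R] [LinearOrder R]
    [IsStrictOrderedRing R] {c : R} (hc0 : 0 ≤ c) (hc : c ≤ 1 / 2) {v : ℕ → R} {n : ℕ}
    (h0 : v 0 = 0) (hn : v (n + 1) = 0) :
    ∑ j ∈ Icc 1 n, (v j + c * secondDiff v j) ^ 2 ≤ ∑ j ∈ Icc 1 n, v j ^ 2 := by
  set T := ∑ j ∈ Icc 1 (n + 1), backwardDiff v j ^ 2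
  have hT : 0 ≤ T := sum_nonneg fun _ _ ↦ sq_nonneg _
  have h_expand : ∑ j ∈ Icc 1 n, (v j + c * secondDiff v j) ^ 2 =
      ∑ j ∈ Icc 1 n, v j ^ 2 + 2 * c * ∑ j ∈ Icc 1 n, v j * secondDiff v j +
        c ^ 2 * ∑ j ∈ Icc 1 n, secondDiff v j ^ 2 := by
    rw [mul_sum, mul_sum, ← sum_add_distrib, ← sum_add_distrib]
    exact sum_congr rfl fun _ _ ↦ by ring
  have h_second : c ^ 2 * ∑ j ∈ Icc 1 n, secondDiff v j ^ 2 ≤ c ^ 2 * (4 * T) :=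
    mul_le_mul_of_nonneg_left (sum_sq_secondDiff_le v n) (sq_nonneg c)
  have h_gain : 0 ≤ 2 * c * (1 - 2 * c) * T :=
    mul_nonneg (mul_nonneg (by linarith) (by linarith)) hT
  rw [h_expand, sum_mul_secondDiff_of_boundary_eq_zero h0 hn]
  linarith

theorem compact_operator_contraction_general (α : ℝ) (hα1 : 1 < α) (hα2 : α < 2)
    (M : ℕ) (v : ℕ → ℝ) (hv0 : v 0 = 0) (hvM : v M = 0) :
    ∑ j ∈ Finset.Icc 1 (M - 1),
        (v j + α / 24 * (v (j + 1) - 2 * v j + v (j - 1))) ^ 2 ≤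
      ∑ j ∈ Finset.Icc 1 (M - 1), (v j) ^ 2 := by
  cases M with
  | zero => simp
  | succ n => exact sum_sq_add_mul_secondDiff_le (by linarith) (by linarith) hv0 hvM

theorem compact_operator_contraction (α : ℝ) (hα1 : 1 < α) (hα2 : α < 2)
    (M : ℕ) (hM : 2 ≤ M) (v : ℕ → ℝ) (hv0 : v 0 = 0) (hvM : v M = 0) :
    ∑ j ∈ Finset.Icc 1 (M - 1),
        (v j + α / 24 * (v (j + 1) - 2 * v j + v (j - 1))) ^ 2 ≤
      ∑ j ∈ Finset.Icc 1 (M - 1), (v j) ^ 2 :=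
  compact_operator_contraction_general α hα1 hα2 M v hv0 hvM
end

section
/- For every real α with α ≥ 1, the series Σ_{n=1}^{∞} 1/((n + α/2)(n + α)) converges and satisfies the strict bound (1/2) · Σ_{n=1}^{∞} 1/((n + α/2)(n + α)) < π²/4 − 2. -/
/-! For `α ≥ 1` each term is smaller than `1 / (n + 3/2)²`, and
`∑ 1 / (n + 3/2)² = 4 ∑_{k ≥ 1} 1 / (2k + 1)² = 4 (π²/8 - 1) = π²/2 - 4`,
where the odd Basel sum `π²/8` is `π²/6` minus its even part `π²/24`. -/

open Real

theorem hasSum_one_div_odd_sq :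
    HasSum (fun k : ℕ => 1 / (2 * (k : ℝ) + 1) ^ 2) (π ^ 2 / 8) := by
  have heven : HasSum (fun k : ℕ => 1 / ((2 * k : ℕ) : ℝ) ^ 2) (π ^ 2 / 24) := by
    have h := (hasSum_zeta_two.mul_left (1 / 4)).congr_fun
      (g := fun k : ℕ => 1 / ((2 * k : ℕ) : ℝ) ^ 2) fun k => by push_cast; ring
    rwa [show 1 / 4 * (π ^ 2 / 6) = π ^ 2 / 24 by ring] at h
  have hodd : Summable (fun k : ℕ => 1 / ((2 * k + 1 : ℕ) : ℝ) ^ 2) :=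
    hasSum_zeta_two.summable.comp_injective fun a b hab => by simpa using hab
  have hsplit := (HasSum.even_add_odd (f := fun n : ℕ => 1 / (n : ℝ) ^ 2) heven
    hodd.hasSum).unique hasSum_zeta_two
  have h := hodd.hasSum.congr_fun (g := fun k : ℕ => 1 / (2 * (k : ℝ) + 1) ^ 2)
    fun k => by push_cast; rfl
  rwa [show ∑' k : ℕ, 1 / ((2 * k + 1 : ℕ) : ℝ) ^ 2 = π ^ 2 / 8 by linarith] at h

theorem hasSum_one_div_add_three_halves_sq :
    HasSum (fun n : ℕ => 1 / ((n : ℝ) + 3 / 2) ^ 2) (π ^ 2 / 2 - 4) := by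
  have htail : HasSum (fun n : ℕ => 1 / (2 * ((n + 1 : ℕ) : ℝ) + 1) ^ 2) (π ^ 2 / 8 - 1) := by
    have h := (hasSum_nat_add_iff' 1).mpr hasSum_one_div_odd_sq
    simpa using h
  have h := (htail.mul_left 4).congr_fun (g := fun n : ℕ => 1 / ((n : ℝ) + 3 / 2) ^ 2)
    fun n => by push_cast; field_simp; ring
  rwa [show 4 * (π ^ 2 / 8 - 1) = π ^ 2 / 2 - 4 by ring] at h

theorem sq_add_three_halves_lt_mul {x α : ℝ} (hx : -(3 / 2) < x) (hα : 1 ≤ α) :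
    (x + 3 / 2) ^ 2 < (x + 1 + α / 2) * (x + 1 + α) := by
  calc (x + 3 / 2) ^ 2 < (x + 3 / 2) * (x + 2) := by nlinarith
    _ ≤ (x + 1 + α / 2) * (x + 1 + α) :=
      mul_le_mul (by linarith) (by linarith) (by linarith) (by linarith)

theorem series_bound_pi_sq (α : ℝ) (hα : 1 ≤ α) :
    Summable (fun n : ℕ => 1 / ((((n : ℝ) + 1) + α / 2) * (((n : ℝ) + 1) + α))) ∧
    (1 / 2) * ∑' n : ℕ, 1 / ((((n : ℝ) + 1) + α / 2) * (((n : ℝ) + 1) + α)) <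
      π ^ 2 / 4 - 2 := by
  have hlt (n : ℕ) : 1 / ((((n : ℝ) + 1) + α / 2) * (((n : ℝ) + 1) + α)) <
      1 / ((n : ℝ) + 3 / 2) ^ 2 :=
    one_div_lt_one_div_of_lt (by positivity)
      (sq_add_three_halves_lt_mul (by linarith [n.cast_nonneg (α := ℝ)]) hα)
  have hbound := hasSum_one_div_add_three_halves_sq
  have hsummable : Summable (fun n : ℕ => 1 / ((((n : ℝ) + 1) + α / 2) * (((n : ℝ) + 1) + α))) :=
    .of_nonneg_of_le (fun n => by positivity) (fun n => (hlt n).le) hbound.summable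
  refine ⟨hsummable, ?_⟩
  have htsum_lt := hsummable.tsum_lt_tsum (fun n => (hlt n).le) (hlt 0) hbound.summable
  rw [hbound.tsum_eq] at htsum_lt
  linarith
end
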